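/- Fix β₋, β₊ ∈ (0,1) and set ϱ₋ = β₋/(1−β₋), ϱ₊ = β₊/(1−β₊). Define φ_ss on {0,…,N}² (restricted to x ≤ y) by φ_ss(x,y) = [α(α+1)(ϱ₊ − ϱ₋)² / (N²(N+1))]·(N−y)·x for 1 ≤ x ≤ y ≤ N−1, with φ_ss(x,y) = 0 whenever x = 0 or y = N, and extended symmetrically. Then for every (x,y) with 1 ≤ x ≤ y ≤ N−1, N²·𝓛_N φ_ss(x,y) = −2·(ϱ₊ − ϱ₋)²·1_{y = x} = −N²·[ (ϱ_ss(x+1) − ϱ_ss(x))² + (ϱ_ss(x−1) − ϱ_ss(x))² ]·1_{y = x}, where ϱ_ss(x) = (ϱ₊ − ϱ₋)·x/N + ϱ₋; that is, φ_ss is the stationary two-points correlation function of the open Harmonic model of interacting piles, and its maximum is of order 1/N. -/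
import Mathlib


noncomputable section

/-- The dual operator `𝓛_N` of the open Harmonic model of interacting piles, acting on
functions `f : {0,…,N}² → ℝ` (vanishing on the boundary, extended symmetrically), for
points `(x,y)` with `1 ≤ x ≤ y ≤ N−1`. -/
def pileOp (α : ℝ) (f : ℤ → ℤ → ℝ) (x y : ℤ) : ℝ :=
  if x = y then
    (1 / (α * (α + 1)))
      * (2 * f (x - 1) x + 2 * f x (x + 1) + f (x - 1) (x - 1) + f (x + 1) (x + 1)
        - 6 * f x x)
  else
    (1 / α) * (f (x - 1) y + f (x + 1) y + f x (y + 1) + f x (y - 1) - 4 * f x y)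

/-- With `ϱ_± = β_±/(1−β_±)`, the function
`φ_ss(x,y) = α(α+1)(ϱ₊−ϱ₋)²(N−y)x/(N²(N+1))` for `1 ≤ x ≤ y ≤ N−1`, vanishing when
`x = 0` or `y = N`, satisfies `N² 𝓛_N φ_ss(x,y) = −2(ϱ₊−ϱ₋)² 1_{y=x}
= −N²[(ϱ_ss(x+1)−ϱ_ss(x))² + (ϱ_ss(x−1)−ϱ_ss(x))²] 1_{y=x}` with
`ϱ_ss(x) = (ϱ₊−ϱ₋)x/N + ϱ₋`: it is the stationary two-points correlation function of the
open Harmonic model, and its maximum is of order `1/N`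
(explicitly, `|φ_ss(x,y)| ≤ α(α+1)(ϱ₊−ϱ₋)²/(4N)`). -/
theorem harmonic_model_stationary_correlation (N : ℤ) (hN : 5 ≤ N) (α : ℝ) (hα : 0 < α)
    (bm bp : ℝ) (hbm0 : 0 < bm) (hbm1 : bm < 1) (hbp0 : 0 < bp) (hbp1 : bp < 1)
    (rm rp : ℝ) (hrm : rm = bm / (1 - bm)) (hrp : rp = bp / (1 - bp))
    (φ : ℤ → ℤ → ℝ) (ρ : ℤ → ℝ)
    (hφ : ∀ x y : ℤ, 1 ≤ x → x ≤ y → y ≤ N - 1 →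
      φ x y = α * (α + 1) * (rp - rm) ^ 2 / ((N : ℝ) ^ 2 * ((N : ℝ) + 1))
        * ((N : ℝ) - y) * x)
    (hφ0 : ∀ y : ℤ, 0 ≤ y → y ≤ N → φ 0 y = 0)
    (hφN : ∀ x : ℤ, 0 ≤ x → x ≤ N → φ x N = 0)
    (hρ : ∀ x : ℤ, ρ x = (rp - rm) * (x : ℝ) / N + rm) :
    ∀ x y : ℤ, 1 ≤ x → x ≤ y → y ≤ N - 1 →
      (N : ℝ) ^ 2 * pileOp α φ x y = -2 * (rp - rm) ^ 2 * (if y = x then 1 else 0)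
        ∧ (N : ℝ) ^ 2 * pileOp α φ x y
          = -(N : ℝ) ^ 2 * ((ρ (x + 1) - ρ x) ^ 2 + (ρ (x - 1) - ρ x) ^ 2)
            * (if y = x then 1 else 0)
        ∧ |φ x y| ≤ α * (α + 1) * (rp - rm) ^ 2 / (4 * N) := by
  have hNR : (5:ℝ) ≤ (N:ℝ) := by exact_mod_cast hN
  have hN0 : (0:ℝ) < (N:ℝ) := by linarith
  set C := α * (α + 1) * (rp - rm) ^ 2 / ((N : ℝ) ^ 2 * ((N : ℝ) + 1)) with hC
  have hext : ∀ x y : ℤ, 0 ≤ x → x ≤ y → y ≤ N →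
      φ x y = C * ((N:ℝ) - (y:ℝ)) * (x:ℝ) := by
    intro x y hx hxy hyN
    rcases eq_or_lt_of_le hx with h0 | h0
    · rw [← h0, hφ0 y (by omega) hyN]
      simp [← h0]
    rcases eq_or_lt_of_le hyN with hNe | hNe
    · subst hNe
      rw [hφN x (by omega) (by omega)]
      ring
    · rw [hφ x y (by omega) hxy (by omega)]
  intro x y hx hxy hyN
  have hα1 : (0:ℝ) < α + 1 := by linarith
  have hρd1 : ρ (x+1) - ρ x = (rp - rm) / N := by
    rw [hρ, hρ]; push_cast; field_simp; ring
  have hρd2 : ρ (x-1) - ρ x = -((rp - rm) / N) := by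
    rw [hρ, hρ]; push_cast; field_simp; ring
  have hmain : (N : ℝ) ^ 2 * pileOp α φ x y
      = -2 * (rp - rm) ^ 2 * (if y = x then 1 else 0) := by
    by_cases hxy' : x = y
    · subst hxy'
      simp only [pileOp, if_pos rfl, if_pos rfl]
      rw [hext (x-1) x (by omega) (by omega) (by omega),
          hext x (x+1) (by omega) (by omega) (by omega),
          hext (x-1) (x-1) (by omega) (by omega) (by omega),
          hext (x+1) (x+1) (by omega) (by omega) (by omega),
          hext x x (by omega) (by omega) (by omega), hC]
      push_cast
      field_simp
      ring
    · simp only [pileOp, if_neg hxy', if_neg (show ¬ y = x from fun h => hxy' h.symm)]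
      rw [hext (x-1) y (by omega) (by omega) (by omega),
          hext (x+1) y (by omega) (by omega) (by omega),
          hext x (y+1) (by omega) (by omega) (by omega),
          hext x (y-1) (by omega) (by omega) (by omega),
          hext x y (by omega) (by omega) (by omega)]
      push_cast
      ring
  refine ⟨hmain, ?_, ?_⟩
  · rw [hmain, hρd1, hρd2]
    field_simp
    ring
  · have hxr : (1:ℝ) ≤ (x:ℝ) := by exact_mod_cast hx
    have hyr : (y:ℝ) ≤ (N:ℝ) - 1 := by
      have : ((y:ℤ):ℝ) ≤ ((N-1:ℤ):ℝ) := by exact_mod_cast hyN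
      push_cast at this; linarith
    have hxyr : (x:ℝ) ≤ (y:ℝ) := by exact_mod_cast hxy
    have hA : (0:ℝ) ≤ α * (α + 1) * (rp - rm) ^ 2 := by positivity
    have hD : (0:ℝ) < (N:ℝ) ^ 2 * ((N:ℝ) + 1) := by positivity
    rw [hext x y (by omega) hxy (by omega), hC]
    have hφnn : (0:ℝ) ≤ α * (α + 1) * (rp - rm) ^ 2 / ((N : ℝ) ^ 2 * ((N : ℝ) + 1))
        * ((N : ℝ) - (y:ℝ)) * (x:ℝ) := by
      have h1 : (0:ℝ) ≤ (N:ℝ) - y := by linarith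
      have h2 : (0:ℝ) ≤ (x:ℝ) := by linarith
      positivity
    rw [abs_of_nonneg hφnn, div_mul_eq_mul_div, div_mul_eq_mul_div,
        div_le_div_iff₀ hD (by linarith : (0:ℝ) < 4 * (N:ℝ))]
    nlinarith [sq_nonneg ((N:ℝ) - 2*x), mul_le_mul_of_nonneg_left (sq_nonneg ((N:ℝ) - 2*x)) hA,
      mul_nonneg hA (mul_nonneg (by linarith : (0:ℝ) ≤ (N:ℝ) - y) (by linarith : (0:ℝ) ≤ (x:ℝ))),
      mul_le_mul_of_nonneg_left (mul_le_mul_of_nonneg_right (by linarith : (N:ℝ) - y ≤ (N:ℝ) - x) (by linarith : (0:ℝ) ≤ (x:ℝ))) hA]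

end
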